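/- Let a be a Lie subalgebra of g, f : a → a* a linear map, and α ∈ g*. Let A_α : g × g* → g × g* be the linear map A_α(x,β) = (x, −ad*_x α + β), where (ad*_x α)(z) = −α([x,z]). Then A_α maps l(a,f) bijectively onto l(a, f + f_α), where f_α(x) = −ad*_x(α|_a). -/
import Mathlib


open Module LieAlgebra

variable {g : Type*} [LieRing g] [LieAlgebra ℂ g]

/-- `l(a,f) = {(x,β) : x ∈ a, β|_a = f(x)}`. -/
def lSet (a : LieSubalgebra ℂ g) (f : a →ₗ[ℂ] Dual ℂ a) : Set (g × Dual ℂ g) :=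
  {p | ∃ x : a, p.1 = ↑x ∧ ∀ y : a, p.2 ↑y = f x y}

/-- For `α ∈ g*`, the map `f_α : a → a*`, `f_α(x)(y) = α([x,y])`
(that is, `f_α(x) = −ad*_x (α|_a)`). -/
noncomputable def fAlpha (a : LieSubalgebra ℂ g) (α : Dual ℂ g) : a →ₗ[ℂ] Dual ℂ a :=
  LinearMap.mk₂ ℂ (fun x y : a => α ⁅(x : g), (y : g)⁆)
    (by intro x x' y; simp [add_lie])
    (by intro c x y
        show α ⁅((c • x : a) : g), (y : g)⁆ = c • α ⁅(x : g), (y : g)⁆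
        rw [show ((c • x : a) : g) = c • (x : g) from rfl]
        simp [smul_lie])
    (by intro x y y'; simp [lie_add])
    (by intro c x y
        show α ⁅(x : g), ((c • y : a) : g)⁆ = c • α ⁅(x : g), (y : g)⁆
        rw [show ((c • y : a) : g) = c • (y : g) from rfl]
        simp [lie_smul])

/-- The map `A_α(x,β) = (x, −ad*_x α + β)`, where `(−ad*_x α)(z) = α([x,z])`. -/
noncomputable def aMap (α : Dual ℂ g) (p : g × Dual ℂ g) : g × Dual ℂ g :=
  (p.1, p.2 + α ∘ₗ (ad ℂ g p.1 : g →ₗ[ℂ] g))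

/-- `A_α` maps `l(a,f)` bijectively onto `l(a, f + f_α)`. -/
theorem aMap_bijOn (a : LieSubalgebra ℂ g) (f : a →ₗ[ℂ] Dual ℂ a) (α : Dual ℂ g) :
    Set.BijOn (aMap α) (lSet a f) (lSet a (f + fAlpha a α)) := by
  refine ⟨?_, ?_, ?_⟩
  · rintro ⟨x, β⟩ ⟨x', hx, hβ⟩
    refine ⟨x', hx, fun y => ?_⟩
    simp only [aMap, hx, LinearMap.add_apply, LinearMap.comp_apply, ad_apply,
      fAlpha, LinearMap.mk₂_apply, hβ y]
    rw [show x = (x' : g) from hx]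
  · rintro ⟨x, β⟩ ⟨x', hx, -⟩ ⟨y, γ⟩ ⟨y', hy, -⟩ h
    have h1 : x = y := congrArg Prod.fst h
    have h2 : β + α ∘ₗ (ad ℂ g x : g →ₗ[ℂ] g) = γ + α ∘ₗ (ad ℂ g y : g →ₗ[ℂ] g) :=
      congrArg Prod.snd h
    subst h1
    have : β = γ := by
      have := add_right_cancel h2
      exact this
    simp [this]
  · rintro ⟨x, γ⟩ ⟨x', hx, hγ⟩
    refine ⟨(x, γ - α ∘ₗ (ad ℂ g x : g →ₗ[ℂ] g)), ⟨x', hx, fun y => ?_⟩, ?_⟩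
    · have := hγ y
      simp only [LinearMap.add_apply, fAlpha, LinearMap.mk₂_apply] at this
      simp only [LinearMap.sub_apply, LinearMap.comp_apply, ad_apply, this]
      rw [show x = (x' : g) from hx]
      ring
    · simp [aMap]
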